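/- If X is a weakly prime submodule of M with X(X:_R M) ≠ 0, then X is a prime submodule of M. -/

import Mathlib

/-! Given `Y I ⊆ X`, pass to `Y' = Y + X` and `J = I + (X :_R M)`. Still `Y' J ⊆ X`, and now
`Y' J ⊇ X (X :_R M) ≠ 0`, so weak primeness applies to `(Y', J)`; either conclusion for
`(Y', J)` restricts to the same conclusion for `(Y, I)`. -/

open MulOpposite Submodule

variable {R : Type*} [Ring R] {M : Type*} [AddCommGroup M] [Module Rᵐᵒᵖ M]

/-- The product `Y·A` of a set of elements of a right `R`-module `M` and a set of ring
elements: the submodule of all finite sums `Σ yᵢ·aᵢ` with `yᵢ ∈ Y`, `aᵢ ∈ A`. -/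
def sProd (Y : Set M) (A : Set R) : Submodule Rᵐᵒᵖ M :=
  Submodule.span Rᵐᵒᵖ {z | ∃ y ∈ Y, ∃ a ∈ A, z = op a • y}

/-- `(X :_R N) = {r : R | N·r ⊆ X}`. -/
def colR (X : Set M) (N : Set M) : Set R := {r | ∀ m ∈ N, op r • m ∈ X}

/-- `(X :_M A) = {m : M | m·A ⊆ X}`. -/
def colM (X : Set M) (A : Set R) : Set M := {m | ∀ r ∈ A, op r • m ∈ X}

/-- A function `φ : S(M) → S(M) ∪ {∅}` (values are either `∅` or submodules) with
`φ(X) ⊆ X` for every submodule `X`. -/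
def GoodPhi (φ : Submodule Rᵐᵒᵖ M → Set M) : Prop :=
  ∀ N : Submodule Rᵐᵒᵖ M, φ N ⊆ N ∧
    (φ N = (∅ : Set M) ∨ ∃ P : Submodule Rᵐᵒᵖ M, φ N = (P : Set M))

/-- `X` is a φ-prime submodule of the right `R`-module `M`. -/
def PhiPrime (φ : Submodule Rᵐᵒᵖ M → Set M) (X : Submodule Rᵐᵒᵖ M) : Prop :=
  X ≠ ⊤ ∧ ∀ (Y : Submodule Rᵐᵒᵖ M) (I : TwoSidedIdeal R),
    (sProd (Y : Set M) (I : Set R) : Set M) ⊆ (X : Set M) →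
    ¬((sProd (Y : Set M) (I : Set R) : Set M) ⊆ φ X) →
    (Y : Set M) ⊆ (X : Set M) ∨ (I : Set R) ⊆ colR (X : Set M) Set.univ

/-- `X` is a prime submodule of the right `R`-module `M`. -/
def PrimeSub (X : Submodule Rᵐᵒᵖ M) : Prop :=
  X ≠ ⊤ ∧ ∀ (Y : Submodule Rᵐᵒᵖ M) (I : TwoSidedIdeal R),
    (sProd (Y : Set M) (I : Set R) : Set M) ⊆ (X : Set M) →
    (Y : Set M) ⊆ (X : Set M) ∨ (I : Set R) ⊆ colR (X : Set M) Set.univ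

/-- `X` is a weakly prime submodule of the right `R`-module `M`. -/
def WeaklyPrime (X : Submodule Rᵐᵒᵖ M) : Prop :=
  X ≠ ⊤ ∧ ∀ (Y : Submodule Rᵐᵒᵖ M) (I : TwoSidedIdeal R),
    sProd (Y : Set M) (I : Set R) ≠ ⊥ →
    (sProd (Y : Set M) (I : Set R) : Set M) ⊆ (X : Set M) →
    (Y : Set M) ⊆ (X : Set M) ∨ (I : Set R) ⊆ colR (X : Set M) Set.univ

/-- `X` is an almost prime submodule of the right `R`-module `M`. -/
def AlmostPrime (X : Submodule Rᵐᵒᵖ M) : Prop :=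
  X ≠ ⊤ ∧ ∀ (Y : Submodule Rᵐᵒᵖ M) (I : TwoSidedIdeal R),
    (sProd (Y : Set M) (I : Set R) : Set M) ⊆ (X : Set M) →
    ¬((sProd (Y : Set M) (I : Set R) : Set M) ⊆
        (sProd (X : Set M) ((colR (X : Set M) Set.univ : Set R)) : Set M)) →
    (Y : Set M) ⊆ (X : Set M) ∨ (I : Set R) ⊆ colR (X : Set M) Set.univ

/-- `powAct X n = X (X :_R M)ⁿ`. -/
def powAct (X : Submodule Rᵐᵒᵖ M) : ℕ → Submodule Rᵐᵒᵖ M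
  | 0 => X
  | n + 1 => sProd (powAct X n : Set M) ((colR (X : Set M) Set.univ : Set R))

/-- The product of two sets of ring elements: all finite sums `Σ aᵢbᵢ`, `aᵢ ∈ A`, `bᵢ ∈ B`. -/
def idMul (A B : Set R) : Set R :=
  (AddSubmonoid.closure {x | ∃ a ∈ A, ∃ b ∈ B, x = a * b} : AddSubmonoid R)

/-- A prime (two-sided) ideal of a possibly noncommutative ring. -/
def TIPrime (P : TwoSidedIdeal R) : Prop :=
  (P : Set R) ≠ Set.univ ∧ ∀ I J : TwoSidedIdeal R,
    idMul (I : Set R) (J : Set R) ⊆ (P : Set R) →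
    (I : Set R) ⊆ (P : Set R) ∨ (J : Set R) ⊆ (P : Set R)

/-- The radical `√A`: the intersection of all prime two-sided ideals containing `A`. -/
def radSet (A : Set R) : Set R :=
  {x | ∀ P : TwoSidedIdeal R, TIPrime P → A ⊆ (P : Set R) → x ∈ (P : Set R)}

/-- A ψ-prime two-sided ideal of a possibly noncommutative ring. -/
def PsiPrime (ψ : TwoSidedIdeal R → Set R) (A : TwoSidedIdeal R) : Prop :=
  (A : Set R) ≠ Set.univ ∧ ∀ I J : TwoSidedIdeal R,
    idMul (I : Set R) (J : Set R) ⊆ (A : Set R) →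
    ¬(idMul (I : Set R) (J : Set R) ⊆ ψ A) →
    (I : Set R) ⊆ (A : Set R) ∨ (J : Set R) ⊆ (A : Set R)

/-- The induced function `φ_Y` on submodules of `M/Y`: `φ_Y(X/Y) = (φ(X)+Y)/Y`. -/
def phiQuot (φ : Submodule Rᵐᵒᵖ M → Set M) (Y : Submodule Rᵐᵒᵖ M) :
    Submodule Rᵐᵒᵖ (M ⧸ Y) → Set (M ⧸ Y) :=
  fun Q => Y.mkQ '' (φ (Q.comap Y.mkQ))

/-- The colon `(X :_R Y)` of two submodules, as a two-sided ideal of `R`. -/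
def colTI (X Y : Submodule Rᵐᵒᵖ M) : TwoSidedIdeal R :=
  TwoSidedIdeal.mk' (colR (X : Set M) (Y : Set M))
    (by intro m hm; simp)
    (by intro x y hx hy m hm
        rw [op_add, add_smul]
        exact X.add_mem (hx m hm) (hy m hm))
    (by intro x hx m hm
        rw [op_neg, neg_smul]
        exact X.neg_mem (hx m hm))
    (by intro x y hy m hm
        rw [op_mul, mul_smul]
        exact hy _ (Y.smul_mem (op x) hm))
    (by intro x y hx m hm
        rw [op_mul, mul_smul]
        exact X.smul_mem (op y) (hx m hm))

/-- The colon `(X :_M I)` as a submodule of `M`, for a two-sided ideal `I`. -/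
def colMS (X : Submodule Rᵐᵒᵖ M) (I : TwoSidedIdeal R) : Submodule Rᵐᵒᵖ M where
  carrier := colM (X : Set M) (I : Set R)
  add_mem' := by
    intro a b ha hb r hr
    rw [smul_add]
    exact X.add_mem (ha r hr) (hb r hr)
  zero_mem' := by
    intro r hr
    rw [smul_zero]
    exact X.zero_mem
  smul_mem' := by
    intro c m hm r hr
    rw [← mul_smul, show op r * c = op (unop c * r) from by rw [op_mul, op_unop]]
    exact hm _ (I.mul_mem_left _ _ hr)

/-- `M` is a multiplication right `R`-module: every submodule `X` equals `M(X :_R M)`. -/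
def IsMultiplication (R : Type*) [Ring R] (M : Type*) [AddCommGroup M]
    [Module Rᵐᵒᵖ M] : Prop :=
  ∀ X : Submodule Rᵐᵒᵖ M, X = sProd (Set.univ : Set M) ((colR (X : Set M) Set.univ : Set R))

/-- The product `XY = M(X :_R M)(Y :_R M)` of two submodules of a multiplication module. -/
def mprod (X Y : Submodule Rᵐᵒᵖ M) : Submodule Rᵐᵒᵖ M :=
  sProd ((sProd (Set.univ : Set M) ((colR (X : Set M) Set.univ : Set R)) : Submodule Rᵐᵒᵖ M) : Set M)
    ((colR (Y : Set M) Set.univ : Set R))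

/-- A φ-m-system in a right `R`-module `M`. -/
def PhiMSystem (φ : Submodule Rᵐᵒᵖ M → Set M) (S : Set M) : Prop :=
  S.Nonempty ∧ ∀ (Y₁ Y₂ : Submodule Rᵐᵒᵖ M) (I : TwoSidedIdeal R),
    ((Y₁ ⊔ Y₂ : Submodule Rᵐᵒᵖ M) : Set M) ∩ S ≠ ∅ →
    ((Y₁ ⊔ sProd (Set.univ : Set M) (I : Set R) : Submodule Rᵐᵒᵖ M) : Set M) ∩ S ≠ ∅ →
    ¬((sProd (Y₂ : Set M) (I : Set R) : Set M) ⊆ φ (Submodule.span Rᵐᵒᵖ Sᶜ)) →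
    ((Y₁ ⊔ sProd (Y₂ : Set M) (I : Set R) : Submodule Rᵐᵒᵖ M) : Set M) ∩ S ≠ ∅

lemma sProd_le_iff {Y : Set M} {A : Set R} {N : Submodule Rᵐᵒᵖ M} :
    sProd Y A ≤ N ↔ A ⊆ colR (N : Set M) Y := by
  rw [sProd, Submodule.span_le]
  constructor
  · intro h a ha y hy
    exact h ⟨y, hy, a, ha, rfl⟩
  · rintro h _ ⟨y, hy, a, ha, rfl⟩
    exact h ha y hy

lemma sProd_mono {Y Y' : Set M} {A A' : Set R} (hY : Y ⊆ Y') (hA : A ⊆ A') :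
    sProd Y A ≤ sProd Y' A' := by
  refine Submodule.span_mono ?_
  rintro _ ⟨y, hy, a, ha, rfl⟩
  exact ⟨y, hY hy, a, hA ha, rfl⟩

lemma coe_colTI (X Y : Submodule Rᵐᵒᵖ M) :
    (colTI X Y : Set R) = colR (X : Set M) (Y : Set M) :=
  TwoSidedIdeal.coe_mk' _ _ _ _ _ _

lemma coe_colTI_top (X : Submodule Rᵐᵒᵖ M) :
    (colTI X ⊤ : Set R) = colR (X : Set M) Set.univ := by
  rw [coe_colTI, Submodule.top_coe]

lemma sProd_le_iff_le_colTI {Y N : Submodule Rᵐᵒᵖ M} {I : TwoSidedIdeal R} :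
    sProd (Y : Set M) (I : Set R) ≤ N ↔ I ≤ colTI N Y := by
  rw [sProd_le_iff, TwoSidedIdeal.le_iff, coe_colTI]

lemma colTI_antitone (X : Submodule Rᵐᵒᵖ M) {Y Y' : Submodule Rᵐᵒᵖ M} (h : Y ≤ Y') :
    colTI X Y' ≤ colTI X Y := by
  rw [TwoSidedIdeal.le_iff, coe_colTI, coe_colTI]
  exact fun r hr m hm => hr m (h hm)

lemma colTI_sup_self (X Y : Submodule Rᵐᵒᵖ M) : colTI X (Y ⊔ X) = colTI X Y := by
  refine le_antisymm (colTI_antitone X le_sup_left) ?_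
  rw [TwoSidedIdeal.le_iff, coe_colTI, coe_colTI]
  intro r hr m hm
  obtain ⟨y, hy, x, hx, rfl⟩ := Submodule.mem_sup.1 hm
  rw [smul_add]
  exact X.add_mem (hr y hy) (X.smul_mem _ hx)

/-- If `X` is a weakly prime submodule of `M` with
`X(X :_R M) ≠ 0`, then `X` is a prime submodule of `M`. -/
theorem stmt_3 (X : Submodule Rᵐᵒᵖ M) (hX : WeaklyPrime X)
    (h : sProd (X : Set M) ((colR (X : Set M) Set.univ : Set R)) ≠ ⊥) :
    PrimeSub X := by
  obtain ⟨hne, hweak⟩ := hX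
  refine ⟨hne, fun Y I hYI => ?_⟩
  set J : TwoSidedIdeal R := I ⊔ colTI X ⊤
  have hJ : J ≤ colTI X (Y ⊔ X) :=
    colTI_sup_self X Y ▸ sup_le (sProd_le_iff_le_colTI.1 hYI) (colTI_antitone X le_top)
  have hle : sProd ((Y ⊔ X : Submodule Rᵐᵒᵖ M) : Set M) (J : Set R) ≤ X :=
    sProd_le_iff_le_colTI.2 hJ
  have hcolJ : colR (X : Set M) Set.univ ⊆ (J : Set R) :=
    coe_colTI_top X ▸ (le_sup_right : colTI X ⊤ ≤ J)
  have hne_bot : sProd ((Y ⊔ X : Submodule Rᵐᵒᵖ M) : Set M) (J : Set R) ≠ ⊥ := fun hbot =>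
    h (le_bot_iff.1 (hbot ▸ sProd_mono (SetLike.coe_subset_coe.2 le_sup_right) hcolJ))
  rcases hweak _ J hne_bot hle with hY | hJ'
  · exact Or.inl ((SetLike.coe_subset_coe.2 le_sup_left).trans hY)
  · exact Or.inr ((TwoSidedIdeal.le_iff.1 le_sup_left).trans hJ')
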